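/- Let V be a real inner product space, let γ₁, γ₂ ∈ V be nonzero orthogonal vectors, and set σ = γ₁ + γ₂. If χ ∈ V satisfies 2(χ,γ₁)/(γ₁,γ₁) = 2(χ,γ₂)/(γ₂,γ₂), then s_{γ₁}(s_{γ₂}(χ)) = s_σ(χ), i.e. the composite of the reflections in γ₁ and γ₂ agrees on χ with the reflection in σ: s_{γ₁}(s_{γ₂}(χ)) = χ − (2(χ,σ)/(σ,σ))·σ. -/

import Mathlib

open RealInnerProductSpace

/-- The pairing `⟨x | v∨⟩ = 2(x,v)/(v,v)` of a vector against the "coroot" of `v`. -/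
noncomputable def pairR {V : Type*} [NormedAddCommGroup V] [InnerProductSpace ℝ V]
    (x v : V) : ℝ := 2 * ⟪x, v⟫ / ⟪v, v⟫

/-- The reflection `s_v(x) = x - ⟨x|v∨⟩ v` in the nonzero vector `v`. -/
noncomputable def reflV {V : Type*} [NormedAddCommGroup V] [InnerProductSpace ℝ V]
    (v x : V) : V := x - pairR x v • v

/-! Both reflections move `χ` by `c = ⟨χ|γ₁∨⟩ = ⟨χ|γ₂∨⟩`: `s_{γ₂}` subtracts `c γ₂`, which does
not change the pairing with the orthogonal `γ₁`, so `s_{γ₁}` then subtracts `c γ₁`. Since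
`2(χ,γᵢ) = c (γᵢ,γᵢ)`, orthogonality gives `⟨χ|σ∨⟩ = c` as well, so `s_σ` subtracts `c σ`. -/

section

variable {V : Type*} [NormedAddCommGroup V] [InnerProductSpace ℝ V]

-- Holds also for `v = 0`, where `pairR x 0 = 0` by the convention `a / 0 = 0`.
lemma pairR_mul_inner_self (x v : V) : pairR x v * ⟪v, v⟫ = 2 * ⟪x, v⟫ := by
  rcases eq_or_ne v 0 with rfl | hv
  · simp
  · exact div_mul_cancel₀ _ (inner_self_ne_zero.mpr hv)

lemma pairR_sub_smul_of_inner_eq_zero {w v : V} (hwv : ⟪w, v⟫ = 0) (x : V) (t : ℝ) :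
    pairR (x - t • w) v = pairR x v := by
  simp only [pairR, inner_sub_left, real_inner_smul_left, hwv, mul_zero, sub_zero]

lemma pairR_add_of_inner_eq_zero {γ₁ γ₂ : V} (horth : ⟪γ₁, γ₂⟫ = 0) {x : V} {c : ℝ}
    (hc₁ : pairR x γ₁ = c) (hc₂ : pairR x γ₂ = c) : pairR x (γ₁ + γ₂) = c := by
  have hnorm : ⟪γ₁ + γ₂, γ₁ + γ₂⟫ = ⟪γ₁, γ₁⟫ + ⟪γ₂, γ₂⟫ := by
    rw [real_inner_add_add_self, horth, mul_zero, add_zero]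
  rcases eq_or_ne (⟪γ₁, γ₁⟫ + ⟪γ₂, γ₂⟫) 0 with h | h
  · have hγ₁ : ⟪γ₁, γ₁⟫ = 0 :=
      le_antisymm (by linarith [real_inner_self_nonneg (x := γ₂)]) real_inner_self_nonneg
    rw [← hc₁, pairR, pairR, hnorm, h, hγ₁, div_zero, div_zero]
  · have h₁ : c * ⟪γ₁, γ₁⟫ = 2 * ⟪x, γ₁⟫ := hc₁ ▸ pairR_mul_inner_self x γ₁
    have h₂ : c * ⟪γ₂, γ₂⟫ = 2 * ⟪x, γ₂⟫ := hc₂ ▸ pairR_mul_inner_self x γ₂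
    rw [pairR, hnorm, inner_add_right, div_eq_iff h]
    linarith

end

theorem stmt9_general {V : Type*} [NormedAddCommGroup V] [InnerProductSpace ℝ V]
    (γ₁ γ₂ : V) (horth : ⟪γ₁, γ₂⟫ = 0)
    (χ : V) (hχ : pairR χ γ₁ = pairR χ γ₂) :
    reflV γ₁ (reflV γ₂ χ) = χ - pairR χ (γ₁ + γ₂) • (γ₁ + γ₂) := by
  set c := pairR χ γ₂
  have hfirst : pairR (reflV γ₂ χ) γ₁ = c := by
    rw [reflV, pairR_sub_smul_of_inner_eq_zero (real_inner_comm γ₁ γ₂ ▸ horth), hχ]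
  have hσ : pairR χ (γ₁ + γ₂) = c := pairR_add_of_inner_eq_zero horth hχ rfl
  rw [reflV, hfirst, reflV, hσ, smul_add]
  abel

/-- if `γ₁, γ₂` are nonzero orthogonal vectors, `σ = γ₁ + γ₂`, and
`⟨χ|γ₁∨⟩ = ⟨χ|γ₂∨⟩`, then `s_{γ₁}(s_{γ₂}(χ)) = s_σ(χ) = χ - ⟨χ|σ∨⟩ σ`. -/
theorem stmt9 {V : Type*} [NormedAddCommGroup V] [InnerProductSpace ℝ V]
    (γ₁ γ₂ : V) (h₁ : γ₁ ≠ 0) (h₂ : γ₂ ≠ 0) (horth : ⟪γ₁, γ₂⟫ = 0)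
    (χ : V) (hχ : pairR χ γ₁ = pairR χ γ₂) :
    reflV γ₁ (reflV γ₂ χ) = χ - pairR χ (γ₁ + γ₂) • (γ₁ + γ₂) :=
  stmt9_general γ₁ γ₂ horth χ hχ
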